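/- arXiv:1612.07519 — 4 statements merged into one kernel-verified Lean document; each statement's English description precedes it below -/
import Mathlib

section
/- Let (W,W') be an exchangeable pair of ℤ^d-valued random vectors, ξ := W'-W, and J ∈ ℤ^d with q^J := P[ξ=J] > 0. Define Q^J(W) := P[ξ = J | W] and u^J := (q^J)⁻¹ E|Q^J(W) - q^J|. Then the total variation distance between the law of W+J and the law of W satisfies d_TV(L(W+J), L(W)) ≤ u^J + u^{-J}. -/
open MeasureTheory

/-- Total variation distance between two measures. -/
noncomputable def tvDist {α : Type*} [MeasurableSpace α] (μ ν : Measure α) : ℝ :=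
  ⨆ s : Set α, |(μ s).toReal - (ν s).toReal|

/-!
Write `ξ = W' - W`, `q K = P[ξ = K]` and `Q K = P[ξ = K | W]`. Exchangeability turns
`P[W + J ∈ s, ξ = J]` (the event `W' ∈ s, ξ = J`) into `P[W ∈ s, ξ = -J]`, and in particular
`q (-J) = q J`. Integrating `Q J - q J` over `{W + J ∈ s}` and `Q (-J) - q (-J)` over `{W ∈ s}`
and subtracting, the two joint probabilities cancel and what is left is
`q J * (P[W + J ∈ s] - P[W ∈ s])`, which is therefore at most
`E|Q J - q J| + E|Q (-J) - q (-J)|`.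
-/

section Exchangeable

variable {Ω α : Type*} [MeasurableSpace Ω] {ℙ : Measure Ω} [MeasurableSpace α] {W W' : Ω → α}

theorem measure_preimage_swap_of_exchangeable (hW : Measurable W) (hW' : Measurable W')
    (hex : ℙ.map (fun ω => (W ω, W' ω)) = ℙ.map (fun ω => (W' ω, W ω)))
    {C : Set (α × α)} (hC : MeasurableSet C) :
    ℙ ((fun ω => (W ω, W' ω)) ⁻¹' C) = ℙ ((fun ω => (W' ω, W ω)) ⁻¹' C) := by
  rw [← Measure.map_apply (hW.prodMk hW') hC, hex, Measure.map_apply (hW'.prodMk hW) hC]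

variable [AddCommGroup α] [MeasurableSingletonClass α] [MeasurableSub₂ α]

theorem measure_shift_inter_increment_eq (hW : Measurable W) (hW' : Measurable W')
    (hex : ℙ.map (fun ω => (W ω, W' ω)) = ℙ.map (fun ω => (W' ω, W ω)))
    {s : Set α} (hs : MeasurableSet s) (J : α) :
    ℙ ({ω | W ω + J ∈ s} ∩ {ω | W' ω - W ω = J}) =
      ℙ ({ω | W ω ∈ s} ∩ {ω | W' ω - W ω = -J}) := by
  have hC : MeasurableSet {p : α × α | p.2 ∈ s ∧ p.2 - p.1 = J} :=
    (measurable_snd hs).inter ((measurable_snd.sub measurable_fst) (measurableSet_singleton J))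
  convert measure_preimage_swap_of_exchangeable hW hW' hex hC using 2 <;> ext ω
  · simp only [Set.mem_inter_iff, Set.mem_ofPred_eq, Set.mem_preimage]
    exact and_congr_left fun hξ => by rw [← hξ, add_sub_cancel]
  · simp only [Set.mem_inter_iff, Set.mem_ofPred_eq, Set.mem_preimage]
    rw [← neg_sub, neg_inj]

end Exchangeable

section CondExp

variable {Ω : Type*} {m mΩ : MeasurableSpace Ω} {μ : Measure Ω}

theorem setIntegral_condExp_indicator_sub_const (hm : m ≤ mΩ) [IsFiniteMeasure μ]
    {E A : Set Ω} (hE : MeasurableSet E) (hA : MeasurableSet[m] A) (c : ℝ) :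
    ∫ ω in A, (μ[E.indicator (fun _ => (1 : ℝ)) | m] ω - c) ∂μ =
      μ.real (A ∩ E) - c * μ.real A := by
  rw [integral_sub integrable_condExp.integrableOn (integrable_const c),
    setIntegral_condExp hm ((integrable_const 1).indicator hE) hA, setIntegral_indicator hE,
    setIntegral_const, setIntegral_const, smul_eq_mul, mul_one, smul_eq_mul, mul_comm]

theorem abs_setIntegral_le_integral_abs {f : Ω → ℝ} (hf : Integrable f μ) (A : Set Ω) :
    |∫ ω in A, f ω ∂μ| ≤ ∫ ω, |f ω| ∂μ :=
  abs_integral_le_integral_abs.trans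
    (setIntegral_le_integral hf.abs (ae_of_all _ fun _ => abs_nonneg _))

end CondExp

section ShiftBound

variable {Ω α : Type*} [MeasurableSpace Ω] [MeasurableSpace α] [AddCommGroup α]

noncomputable def incrementProb (ℙ : Measure Ω) (W W' : Ω → α) (K : α) : ℝ :=
  ℙ.real {ω | W' ω - W ω = K}

noncomputable def incrementCondProb (ℙ : Measure Ω) (W W' : Ω → α) (K : α) : Ω → ℝ :=
  ℙ[{ω | W' ω - W ω = K}.indicator (fun _ => (1 : ℝ)) | MeasurableSpace.comap W inferInstance]

variable [MeasurableSingletonClass α] [MeasurableSub₂ α] {ℙ : Measure Ω} {W W' : Ω → α}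

theorem incrementProb_neg (hW : Measurable W) (hW' : Measurable W')
    (hex : ℙ.map (fun ω => (W ω, W' ω)) = ℙ.map (fun ω => (W' ω, W ω))) (J : α) :
    incrementProb ℙ W W' (-J) = incrementProb ℙ W W' J := by
  simpa [incrementProb, Measure.real] using congrArg ENNReal.toReal
    (measure_shift_inter_increment_eq hW hW' hex MeasurableSet.univ J).symm

variable [MeasurableAdd α] [IsProbabilityMeasure ℙ]

theorem incrementProb_mul_shift_sub_eq (hW : Measurable W) (hW' : Measurable W')
    (hex : ℙ.map (fun ω => (W ω, W' ω)) = ℙ.map (fun ω => (W' ω, W ω)))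
    {s : Set α} (hs : MeasurableSet s) (J : α) :
    incrementProb ℙ W W' J * (ℙ.real {ω | W ω + J ∈ s} - ℙ.real {ω | W ω ∈ s}) =
      (∫ ω in {ω | W ω ∈ s},
          (incrementCondProb ℙ W W' (-J) ω - incrementProb ℙ W W' (-J)) ∂ℙ) -
        ∫ ω in {ω | W ω + J ∈ s},
          (incrementCondProb ℙ W W' J ω - incrementProb ℙ W W' J) ∂ℙ := by
  have hξ (K : α) : MeasurableSet {ω | W' ω - W ω = K} :=
    (hW'.sub hW) (measurableSet_singleton K)
  have hA : MeasurableSet[MeasurableSpace.comap W inferInstance] {ω | W ω + J ∈ s} :=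
    ⟨_, measurable_add_const J hs, rfl⟩
  have hB : MeasurableSet[MeasurableSpace.comap W inferInstance] {ω | W ω ∈ s} := ⟨s, hs, rfl⟩
  have hswap : ℙ.real ({ω | W ω + J ∈ s} ∩ {ω | W' ω - W ω = J}) =
      ℙ.real ({ω | W ω ∈ s} ∩ {ω | W' ω - W ω = -J}) :=
    congrArg ENNReal.toReal (measure_shift_inter_increment_eq hW hW' hex hs J)
  rw [incrementCondProb, incrementCondProb,
    setIntegral_condExp_indicator_sub_const hW.comap_le (hξ J) hA,
    setIntegral_condExp_indicator_sub_const hW.comap_le (hξ (-J)) hB, hswap,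
    incrementProb_neg hW hW' hex]
  ring

theorem abs_measureReal_shift_sub_le (hW : Measurable W) (hW' : Measurable W')
    (hex : ℙ.map (fun ω => (W ω, W' ω)) = ℙ.map (fun ω => (W' ω, W ω)))
    {s : Set α} (hs : MeasurableSet s) {J : α} (hqJ : 0 < incrementProb ℙ W W' J) :
    |ℙ.real {ω | W ω + J ∈ s} - ℙ.real {ω | W ω ∈ s}| ≤
      (incrementProb ℙ W W' J)⁻¹ *
          ∫ ω, |incrementCondProb ℙ W W' J ω - incrementProb ℙ W W' J| ∂ℙ +
        (incrementProb ℙ W W' (-J))⁻¹ *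
          ∫ ω, |incrementCondProb ℙ W W' (-J) ω - incrementProb ℙ W W' (-J)| ∂ℙ := by
  have hint (K : α) :
      Integrable (fun ω => incrementCondProb ℙ W W' K ω - incrementProb ℙ W W' K) ℙ :=
    integrable_condExp.sub (integrable_const _)
  have hbound := (abs_sub _ _).trans (add_le_add (abs_setIntegral_le_integral_abs (hint (-J))
    {ω | W ω ∈ s}) (abs_setIntegral_le_integral_abs (hint J) {ω | W ω + J ∈ s}))
  rw [← incrementProb_mul_shift_sub_eq hW hW' hex hs J, abs_mul, abs_of_pos hqJ,
    incrementProb_neg hW hW' hex] at hbound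
  rwa [incrementProb_neg hW hW' hex, ← mul_add, le_inv_mul_iff₀ hqJ, add_comm]

end ShiftBound

theorem stmt5 {Ω : Type*} [MeasurableSpace Ω] (ℙ : Measure Ω) [IsProbabilityMeasure ℙ]
    {d : ℕ} (W W' : Ω → Fin d → ℤ) (hW : Measurable W) (hW' : Measurable W')
    (hex : Measure.map (fun ω => (W ω, W' ω)) ℙ = Measure.map (fun ω => (W' ω, W ω)) ℙ)
    (J : Fin d → ℤ)
    (q : (Fin d → ℤ) → ℝ) (hq : ∀ K, q K = (ℙ {ω | W' ω - W ω = K}).toReal)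
    (hqJ : 0 < q J)
    (Q : (Fin d → ℤ) → Ω → ℝ)
    (hQ : ∀ K, Q K = ℙ[Set.indicator {ω | W' ω - W ω = K} (fun _ => (1 : ℝ)) |
      MeasurableSpace.comap W inferInstance])
    (u : (Fin d → ℤ) → ℝ) (hu : ∀ K, u K = (q K)⁻¹ * ∫ ω, |Q K ω - q K| ∂ℙ) :
    tvDist (Measure.map (fun ω => W ω + J) ℙ) (Measure.map W ℙ) ≤ u J + u (-J) := by
  obtain rfl : q = incrementProb ℙ W W' := funext hq
  obtain rfl : Q = incrementCondProb ℙ W W' := funext hQ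
  rw [hu, hu]
  refine ciSup_le fun s => ?_
  have hs : MeasurableSet s := .of_discrete
  rw [Measure.map_apply (hW.add_const J) hs, Measure.map_apply hW hs]
  exact abs_measureReal_shift_sub_le hW hW' hex hs hqJ
end

section
/- Let W be a ℤ^d-valued random vector and ξ another random vector defined on the same space, J a value with P[ξ=J] > 0. For any coordinate vector e^{(j)}, d_TV(L(W | ξ=J), L(W+e^{(j)} | ξ=J)) ≤ d_TV(L(W), L(W+e^{(j)})) + 2 u^J, where u^J := (P[ξ=J])⁻¹ E|P[ξ=J|W] - P[ξ=J]|. -/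
/-!
Write `A = {ξ = J}`, `q = P(A)` and `Q = P(A | W)`. For an event `B` determined by `W`,
`P(A ∩ B) - q P(B) = ∫_B (Q - q) dP`, so `|P(B | A) - P(B)| ≤ q⁻¹ E|Q - q| = u`. Both `{W ∈ s}` and
`{W + e ∈ s}` are such events, and the triangle inequality through `P(W ∈ s)` and `P(W + e ∈ s)`
gives the bound with `2u`.
-/

open MeasureTheory

section TotalVariation

variable {α : Type*} [MeasurableSpace α]

theorem abs_sub_le_tvDist (μ ν : Measure α) [IsFiniteMeasure μ] [IsFiniteMeasure ν] (s : Set α) :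
    |(μ s).toReal - (ν s).toReal| ≤ tvDist μ ν := by
  refine le_ciSup (f := fun t => |(μ t).toReal - (ν t).toReal|)
    ⟨(μ Set.univ).toReal + (ν Set.univ).toReal, ?_⟩ s
  rintro _ ⟨t, rfl⟩
  have hμ : (μ t).toReal ≤ (μ Set.univ).toReal := measureReal_mono (Set.subset_univ t)
  have hν : (ν t).toReal ≤ (ν Set.univ).toReal := measureReal_mono (Set.subset_univ t)
  rw [abs_le]
  constructor <;> linarith [ENNReal.toReal_nonneg (a := μ t), ENNReal.toReal_nonneg (a := ν t)]

theorem tvDist_le {μ ν : Measure α} {c : ℝ} (h : ∀ s, |(μ s).toReal - (ν s).toReal| ≤ c) :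
    tvDist μ ν ≤ c :=
  ciSup_le h

end TotalVariation

/-- The paper's `u^J`, with `A = {ξ = J}` and conditioning on `W` replaced by a σ-algebra `m`. -/
noncomputable def condDeviation {Ω : Type*} {m0 : MeasurableSpace Ω} (μ : Measure Ω)
    (m : MeasurableSpace Ω) (A : Set Ω) : ℝ :=
  (μ A).toReal⁻¹ * ∫ ω, |μ[A.indicator (fun _ => (1 : ℝ)) | m] ω - (μ A).toReal| ∂μ

section Conditioning

open ProbabilityTheory

variable {Ω : Type*} {m m0 : MeasurableSpace Ω} {μ : Measure Ω} [IsFiniteMeasure μ] {A : Set Ω}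

theorem setIntegral_condExp_indicator_sub (hm : m ≤ m0) (hA : MeasurableSet A) {B : Set Ω}
    (hB : MeasurableSet[m] B) :
    ∫ ω in B, (μ[A.indicator (fun _ => (1 : ℝ)) | m] ω - (μ A).toReal) ∂μ
      = (μ (A ∩ B)).toReal - (μ A).toReal * (μ B).toReal := by
  have hQ : ∫ ω in B, μ[A.indicator (fun _ => (1 : ℝ)) | m] ω ∂μ = (μ (A ∩ B)).toReal := by
    rw [setIntegral_condExp hm ((integrable_const (1 : ℝ)).indicator hA) hB,
      integral_indicator_const (1 : ℝ) hA, measureReal_def, Measure.restrict_apply hA,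
      Set.inter_comm, smul_eq_mul, mul_one]
  rw [integral_sub integrable_condExp.integrableOn (integrable_const _).integrableOn, hQ,
    setIntegral_const, smul_eq_mul, measureReal_def, mul_comm]

theorem abs_cond_sub_le_condDeviation (hm : m ≤ m0) (hA : MeasurableSet A) (hA0 : μ A ≠ 0)
    {B : Set Ω} (hB : MeasurableSet[m] B) :
    |(μ[B | A]).toReal - (μ B).toReal| ≤ condDeviation μ m A := by
  have hq : 0 < (μ A).toReal := ENNReal.toReal_pos hA0 (measure_ne_top μ A)
  have hcond : (μ[B | A]).toReal - (μ B).toReal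
      = (μ A).toReal⁻¹ * ((μ (A ∩ B)).toReal - (μ A).toReal * (μ B).toReal) := by
    rw [cond_apply hA, ENNReal.toReal_mul, ENNReal.toReal_inv]
    field_simp
  have hdev : |∫ ω in B, (μ[A.indicator (fun _ => (1 : ℝ)) | m] ω - (μ A).toReal) ∂μ|
      ≤ ∫ ω, |μ[A.indicator (fun _ => (1 : ℝ)) | m] ω - (μ A).toReal| ∂μ :=
    (abs_integral_le_integral_abs).trans <| setIntegral_le_integral
      (integrable_condExp.sub (integrable_const _)).abs (.of_forall fun _ => abs_nonneg _)
  rw [hcond, ← setIntegral_condExp_indicator_sub hm hA hB, abs_mul, abs_of_pos (inv_pos.2 hq)]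
  exact mul_le_mul_of_nonneg_left hdev (inv_nonneg.2 hq.le)

variable {β : Type*} [MeasurableSpace β] [DiscreteMeasurableSpace β]

theorem tvDist_map_cond_le (hm : m ≤ m0) (hA : MeasurableSet A) (hA0 : μ A ≠ 0)
    {V₁ V₂ : Ω → β} (hV₁ : Measurable[m] V₁) (hV₂ : Measurable[m] V₂) :
    tvDist (μ[|A].map V₁) (μ[|A].map V₂)
      ≤ tvDist (μ.map V₁) (μ.map V₂) + 2 * condDeviation μ m A := by
  have hmap : ∀ {V : Ω → β} (ν : Measure Ω), Measurable[m] V → ∀ s, ν.map V s = ν (V ⁻¹' s) :=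
    fun ν hV _ => Measure.map_apply (hV.mono hm le_rfl) .of_discrete
  refine tvDist_le fun s => ?_
  have h₁ := abs_cond_sub_le_condDeviation (μ := μ) hm hA hA0 (hV₁ (.of_discrete (s := s)))
  have h₂ := abs_cond_sub_le_condDeviation (μ := μ) hm hA hA0 (hV₂ (.of_discrete (s := s)))
  have hTV := abs_sub_le_tvDist (μ.map V₁) (μ.map V₂) s
  rw [hmap _ hV₁, hmap _ hV₂] at hTV ⊢
  rw [abs_le] at h₁ h₂ hTV ⊢
  constructor <;> linarith

end Conditioning

theorem stmt6 {Ω : Type*} [MeasurableSpace Ω] (ℙ : Measure Ω) [IsProbabilityMeasure ℙ]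
    {d : ℕ} (W ξ : Ω → Fin d → ℤ) (hW : Measurable W) (hξ : Measurable ξ)
    (J : Fin d → ℤ) (hJ : 0 < ℙ {ω | ξ ω = J})
    (Q : Ω → ℝ)
    (hQ : Q = ℙ[Set.indicator {ω | ξ ω = J} (fun _ => (1 : ℝ)) |
      MeasurableSpace.comap W inferInstance])
    (u : ℝ)
    (hu : u = (ℙ {ω | ξ ω = J}).toReal⁻¹ * ∫ ω, |Q ω - (ℙ {ω' | ξ ω' = J}).toReal| ∂ℙ)
    (j : Fin d) :
    tvDist (Measure.map W (ProbabilityTheory.cond ℙ {ω | ξ ω = J}))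
        (Measure.map (fun ω => W ω + Pi.single j 1) (ProbabilityTheory.cond ℙ {ω | ξ ω = J}))
      ≤ tvDist (Measure.map W ℙ) (Measure.map (fun ω => W ω + Pi.single j 1) ℙ) + 2 * u := by
  subst hQ hu
  have hσ : Measurable[MeasurableSpace.comap W inferInstance] W := comap_measurable W
  exact tvDist_map_cond_le hW.comap_le (hξ (.singleton J)) hJ.ne' hσ (hσ.add_const _)
end

section
/- Define h : ℝ^d → ℝ by h(z) = (1 + z^T z)^{3/2}. Then for all z, ζ ∈ ℝ^d, |h(z+ζ) - h(z) - 3(1+z^Tz)^{1/2} ζ^T z - (3/2)(ζ^Tz)²(1+z^Tz)^{-1/2} - (3/2)(1+z^Tz)^{1/2}|ζ|²| ≤ 22 |ζ|³. -/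
open scoped RealInnerProductSpace

set_option maxHeartbeats 1000000 in
private lemma scalar12 (s t p a b : ℝ) (hs : 0 ≤ s) (ht : 0 ≤ t)
    (hp : |p| ≤ s * t) (ha1 : 1 ≤ a) (hb1 : 1 ≤ b)
    (ha : a ^ 2 = 1 + s ^ 2) (hb : b ^ 2 = 1 + s ^ 2 + 2 * p + t ^ 2) :
    |b ^ 3 - a ^ 3 - 3 * a * p - (3/2) * p ^ 2 / a - (3/2) * a * t ^ 2| ≤ 22 * t ^ 3 := by
  have ha0 : (0:ℝ) < a := lt_of_lt_of_le one_pos ha1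
  have hb0 : (0:ℝ) < b := lt_of_lt_of_le one_pos hb1
  obtain ⟨hp1, hp2⟩ := abs_le.mp hp
  have hsa : s ≤ a := by nlinarith
  have hst' : s * t ≤ a * t := mul_le_mul_of_nonneg_right hsa ht
  have hb2 : b ^ 2 = a ^ 2 + 2 * p + t ^ 2 := by rw [ha]; linarith
  have ht3 : (0:ℝ) ≤ t ^ 3 := by positivity
  have ht4 : (0:ℝ) ≤ t ^ 4 := by positivity
  rcases le_total t a with hta | hat
  · -- Taylor case : t ≤ a
    have hab : b ≤ a + t := by nlinarith [sq_nonneg (a + t - b)]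
    have hba : a ≤ b + t := by nlinarith [sq_nonneg (s - t), sq_nonneg (b + t - a)]
    have keymul : 8 * a * (b ^ 3 - a ^ 3 - 3 * a * p - (3/2) * a * t ^ 2) - 12 * p ^ 2
        = -(b - a) ^ 3 * (a + 3 * b) + 12 * p * t ^ 2 + 3 * t ^ 4 := by
      linear_combination (9 * a ^ 2 + 3 * b ^ 2 + 6 * p + 3 * t ^ 2) * hb2
    have key : b ^ 3 - a ^ 3 - 3 * a * p - (3/2) * p ^ 2 / a - (3/2) * a * t ^ 2
        = (-(b - a) ^ 3 * (a + 3 * b) + 12 * p * t ^ 2 + 3 * t ^ 4) / (8 * a) := by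
      rw [← keymul]; field_simp; ring
    have h8a : (0:ℝ) < 8 * a := by linarith
    rw [key, abs_div, abs_of_pos h8a, div_le_iff₀ h8a]
    have hd1 : -t ≤ b - a := by linarith
    have hd2 : b - a ≤ t := by linarith
    have hcube1 : (b - a) ^ 3 ≤ t ^ 3 := by
      nlinarith [sq_nonneg (b - a + t), sq_nonneg (b - a - t)]
    have hcube2 : -t ^ 3 ≤ (b - a) ^ 3 := by
      nlinarith [sq_nonneg (b - a + t), sq_nonneg (b - a - t)]
    have hbb : b ≤ 2 * a := by linarith
    have hab7 : a + 3 * b ≤ 7 * a := by linarith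
    have habpos : (0:ℝ) ≤ a + 3 * b := by linarith
    have hT1 : -(b - a) ^ 3 * (a + 3 * b) ≤ 7 * a * t ^ 3 := by
      nlinarith [mul_le_mul_of_nonneg_right (show -(b - a) ^ 3 ≤ t ^ 3 by linarith) habpos,
        mul_le_mul_of_nonneg_left hab7 ht3]
    have hT2 : -(7 * a * t ^ 3) ≤ -(b - a) ^ 3 * (a + 3 * b) := by
      nlinarith [mul_le_mul_of_nonneg_right (show -t ^ 3 ≤ -(b - a) ^ 3 by linarith) habpos,
        mul_le_mul_of_nonneg_left hab7 ht3]
    have hpat : p ≤ a * t := le_trans hp2 hst'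
    have hpat' : -(a * t) ≤ p := by linarith
    have hT3 : p * t ^ 2 ≤ a * t ^ 3 := by
      nlinarith [mul_le_mul_of_nonneg_right hpat (sq_nonneg t)]
    have hT4 : -(a * t ^ 3) ≤ p * t ^ 2 := by
      nlinarith [mul_le_mul_of_nonneg_right hpat' (sq_nonneg t)]
    have hT5 : t ^ 4 ≤ a * t ^ 3 := by
      nlinarith [mul_le_mul_of_nonneg_right hta ht3]
    have hat3 : (0:ℝ) ≤ a * t ^ 3 := mul_nonneg (le_of_lt ha0) ht3
    rw [abs_le]
    constructor <;> linarith
  · -- direct case : a ≤ t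
    have ht1 : 1 ≤ t := le_trans ha1 hat
    have ht0 : (0:ℝ) < t := lt_of_lt_of_le one_pos ht1
    have hst : s ≤ t := le_trans hsa hat
    have hs2t : s ^ 2 ≤ t ^ 2 := by nlinarith [mul_self_le_mul_self hs hst]
    have ht2one : 1 ≤ t ^ 2 := by nlinarith [mul_le_mul_of_nonneg_left ht1 (le_of_lt ht0)]
    have ha2t : a ^ 2 ≤ 2 * t ^ 2 := by linarith [ha]
    have hat' : a ≤ (71/50) * t := by
      nlinarith [ha2t, ht2one, mul_pos ha0 (show (0:ℝ) < a + (71/50) * t by linarith)]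
    have hstt : s * t ≤ t * t := mul_le_mul_of_nonneg_right hst ht
    have hb2t : b ^ 2 ≤ 5 * t ^ 2 := by nlinarith [hb2, ha2t, hp2, hstt]
    have hbt : b ≤ (56/25) * t := by
      nlinarith [hb2t, ht2one, mul_pos hb0 (show (0:ℝ) < b + (56/25) * t by linarith)]
    have hb3 : b ^ 3 ≤ (56/5) * t ^ 3 := by
      calc b ^ 3 = b * b ^ 2 := by ring
        _ ≤ ((56/25) * t) * b ^ 2 := mul_le_mul_of_nonneg_right hbt (sq_nonneg b)
        _ ≤ ((56/25) * t) * (5 * t ^ 2) := mul_le_mul_of_nonneg_left hb2t (by positivity)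
        _ = (56/5) * t ^ 3 := by ring
    have ha3 : a ^ 3 ≤ (71/25) * t ^ 3 := by
      calc a ^ 3 = a * a ^ 2 := by ring
        _ ≤ ((71/50) * t) * a ^ 2 := mul_le_mul_of_nonneg_right hat' (sq_nonneg a)
        _ ≤ ((71/50) * t) * (2 * t ^ 2) := mul_le_mul_of_nonneg_left ha2t (by positivity)
        _ = (71/25) * t ^ 3 := by ring
    have hpsq : p ^ 2 ≤ (s * t) ^ 2 := by nlinarith [sq_nonneg (s * t - p), sq_nonneg (s * t + p)]
    have hs2 : s ^ 2 ≤ a * s := by rw [sq]; exact mul_le_mul_of_nonneg_right hsa hs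
    have hpa : p ^ 2 / a ≤ t ^ 3 := by
      rw [div_le_iff₀ ha0]
      calc p ^ 2 ≤ (s * t) ^ 2 := hpsq
        _ = s ^ 2 * t ^ 2 := by ring
        _ ≤ (a * s) * t ^ 2 := mul_le_mul_of_nonneg_right hs2 (sq_nonneg t)
        _ ≤ (a * t) * t ^ 2 := mul_le_mul_of_nonneg_right
              (mul_le_mul_of_nonneg_left hst (le_of_lt ha0)) (sq_nonneg t)
        _ = t ^ 3 * a := by ring
    have hast : a * s ≤ (71/50) * t ^ 2 := by
      calc a * s ≤ ((71/50) * t) * s := mul_le_mul_of_nonneg_right hat' hs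
        _ ≤ ((71/50) * t) * t := mul_le_mul_of_nonneg_left hst (by positivity)
        _ = (71/50) * t ^ 2 := by ring
    have hast3 : (a * s) * t ≤ (71/50) * t ^ 3 := by
      calc (a * s) * t ≤ ((71/50) * t ^ 2) * t := mul_le_mul_of_nonneg_right hast ht
        _ = (71/50) * t ^ 3 := by ring
    have hap1 : a * p ≤ (71/50) * t ^ 3 := by
      calc a * p ≤ a * (s * t) := mul_le_mul_of_nonneg_left hp2 (le_of_lt ha0)
        _ = (a * s) * t := by ring
        _ ≤ (71/50) * t ^ 3 := hast3
    have hap2 : -((71/50) * t ^ 3) ≤ a * p := by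
      have e1 : a * (-(s * t)) ≤ a * p := mul_le_mul_of_nonneg_left hp1 (le_of_lt ha0)
      have e2 : a * (-(s * t)) = -((a * s) * t) := by ring
      linarith [hast3]
    have hat2 : a * t ^ 2 ≤ (71/50) * t ^ 3 := by
      calc a * t ^ 2 ≤ ((71/50) * t) * t ^ 2 := mul_le_mul_of_nonneg_right hat' (sq_nonneg t)
        _ = (71/50) * t ^ 3 := by ring
    have hp2a : 0 ≤ p ^ 2 / a := div_nonneg (sq_nonneg p) (le_of_lt ha0)
    have hb3pos : (0:ℝ) ≤ b ^ 3 := by positivity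
    have ha3pos : (0:ℝ) ≤ a ^ 3 := by positivity
    have hat2pos : (0:ℝ) ≤ a * t ^ 2 := by positivity
    obtain ⟨r, hr⟩ : ∃ r : ℝ, p ^ 2 / a = r := ⟨p ^ 2 / a, rfl⟩
    have hrw : (3:ℝ)/2 * p ^ 2 / a = 3/2 * r := by rw [← hr]; ring
    rw [hrw, abs_le]
    rw [hr] at hpa hp2a
    constructor <;> linarith

theorem stmt12 {d : ℕ} (z ζ : EuclideanSpace ℝ (Fin d)) :
    |(1 + ⟪z + ζ, z + ζ⟫) ^ ((3 : ℝ)/2) - (1 + ⟪z, z⟫) ^ ((3 : ℝ)/2)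
        - 3 * Real.sqrt (1 + ⟪z, z⟫) * ⟪ζ, z⟫
        - (3/2) * ⟪ζ, z⟫ ^ 2 / Real.sqrt (1 + ⟪z, z⟫)
        - (3/2) * Real.sqrt (1 + ⟪z, z⟫) * ‖ζ‖ ^ 2|
      ≤ 22 * ‖ζ‖ ^ 3 := by
  have hzz : ⟪z, z⟫ = ‖z‖ ^ 2 := real_inner_self_eq_norm_sq z
  have hsum : ⟪z + ζ, z + ζ⟫ = ‖z‖ ^ 2 + 2 * ⟪ζ, z⟫ + ‖ζ‖ ^ 2 := by
    rw [real_inner_self_eq_norm_sq, norm_add_sq_real, real_inner_comm]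
  have hcs : |⟪ζ, z⟫| ≤ ‖z‖ * ‖ζ‖ := by
    rw [mul_comm]; exact abs_real_inner_le_norm ζ z
  obtain ⟨hcs1, hcs2⟩ := abs_le.mp hcs
  have h1 : (0:ℝ) ≤ 1 + ⟪z, z⟫ := by rw [hzz]; positivity
  have h2 : (1:ℝ) ≤ 1 + ⟪z + ζ, z + ζ⟫ := by
    rw [hsum]; nlinarith [sq_nonneg (‖z‖ - ‖ζ‖)]
  have h2' : (0:ℝ) ≤ 1 + ⟪z + ζ, z + ζ⟫ := by linarith
  have hrpow : ∀ x : ℝ, 0 ≤ x → x ^ ((3:ℝ)/2) = Real.sqrt x ^ 3 := by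
    intro x hx
    rw [Real.sqrt_eq_rpow, ← Real.rpow_natCast (x ^ ((1:ℝ)/2)) 3, ← Real.rpow_mul hx]
    norm_num
  rw [hrpow _ h1, hrpow _ h2']
  have ha1 : 1 ≤ Real.sqrt (1 + ⟪z, z⟫) := by
    rw [Real.one_le_sqrt]
    rw [hzz]; nlinarith [sq_nonneg ‖z‖]
  have hb1 : 1 ≤ Real.sqrt (1 + ⟪z + ζ, z + ζ⟫) := Real.one_le_sqrt.mpr h2
  have ha : Real.sqrt (1 + ⟪z, z⟫) ^ 2 = 1 + ‖z‖ ^ 2 := by rw [Real.sq_sqrt h1, hzz]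
  have hb : Real.sqrt (1 + ⟪z + ζ, z + ζ⟫) ^ 2 = 1 + ‖z‖ ^ 2 + 2 * ⟪ζ, z⟫ + ‖ζ‖ ^ 2 := by
    rw [Real.sq_sqrt h2', hsum]; ring
  exact scalar12 ‖z‖ ‖ζ‖ ⟪ζ, z⟫ _ _ (norm_nonneg z) (norm_nonneg ζ) hcs ha1 hb1 ha hb
end

section
/- In the random graph-colouring model (r-regular graph on n vertices, i.i.d. colours with probabilities p_i), if one vertex K chosen uniformly at random has its colour resampled independently (new colour C' with P[C'=i]=p_i), producing new counts (M_i', N_i'), then for each colour l, E[M_l' - M_l | C(1),…,C(n)] = n⁻¹(p_l r N_l - 2 M_l) and E[N_l' - N_l | C(1),…,C(n)] = n⁻¹(n p_l - N_l). -/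
/-!
Given `C`, the pair `(K, C')` is independent of `C` with law `uniform ⊗ p`, so the conditional
expectation of `F (recoloured) - F C` is `n⁻¹ ∑ₖ ∑ᵢ pᵢ (F (c[k ↦ i]) - F c)` at `c = C`.
Recolouring vertex `k` to `i` adds `δ = [i = l] - [c k = l]` at `k` to the indicator vector `x`
of colour `l`; hence `N_l` changes by `δ` and `M_l = ½ xᵀ A x` by `δ (A x)ₖ`, as the diagonal of
the adjacency matrix `A` vanishes. Averaging over `i` turns `δ` into `p_l - x k`, and summing over
`k` gives `n p_l - N_l` and, by `r`-regularity, `p_l r N_l - 2 M_l`.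
-/

open MeasureTheory Finset

namespace ProbabilityTheory

variable {Ω β γ δ : Type*} {mΩ : MeasurableSpace Ω} {μ : Measure Ω} [IsFiniteMeasure μ]
  {mβ : MeasurableSpace β} {mγ : MeasurableSpace γ} {mδ : MeasurableSpace δ}
  {X : Ω → β} {Y : Ω → γ} {Z : Ω → δ}

lemma IndepFun.prodMk_right_of_prodMk_left (hX : Measurable X) (hY : Measurable Y)
    (hZ : Measurable Z) (hXY : IndepFun X Y μ) (hXYZ : IndepFun (fun ω => (X ω, Y ω)) Z μ) :
    IndepFun X (fun ω => (Y ω, Z ω)) μ := by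
  have hYZ : IndepFun Y Z μ := hXYZ.comp measurable_snd measurable_id
  rw [indepFun_iff_map_prod_eq_prod_map_map hX.aemeasurable (hY.prodMk hZ).aemeasurable,
    (indepFun_iff_map_prod_eq_prod_map_map hY.aemeasurable hZ.aemeasurable).1 hYZ,
    ← Measure.prodAssoc_prod,
    ← (indepFun_iff_map_prod_eq_prod_map_map hX.aemeasurable hY.aemeasurable).1 hXY,
    ← (indepFun_iff_map_prod_eq_prod_map_map (hX.prodMk hY).aemeasurable hZ.aemeasurable).1 hXYZ,
    Measure.map_map MeasurableEquiv.prodAssoc.measurable ((hX.prodMk hY).prodMk hZ)]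
  rfl

variable {F : Type*} [NormedAddCommGroup F] [NormedSpace ℝ F] [CompleteSpace F]
  [StandardBorelSpace γ] [Nonempty γ]

theorem IndepFun.condExp_comp_prodMk_ae_eq (hX : Measurable X) (hY : Measurable Y)
    (hXY : IndepFun X Y μ) {f : β × γ → F} (hf : Integrable f (μ.map fun ω => (X ω, Y ω))) :
    μ[fun ω => f (X ω, Y ω) | mβ.comap X] =ᵐ[μ] fun ω => ∫ y, f (X ω, y) ∂(μ.map Y) := by
  have hκ : condDistrib Y X μ =ᵐ[μ.map X] Kernel.const β (μ.map Y) := by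
    refine condDistrib_ae_eq_of_measure_eq_compProd X hY.aemeasurable ?_
    rw [Measure.compProd_const]
    exact (indepFun_iff_map_prod_eq_prod_map_map hX.aemeasurable hY.aemeasurable).1 hXY
  filter_upwards [condExp_prod_ae_eq_integral_condDistrib' hX hY.aemeasurable hf,
    ae_of_ae_map hX.aemeasurable hκ] with ω hω hκω
  rw [hω, hκω, Kernel.const_apply]

end ProbabilityTheory

section Colouring

variable {V α : Type*} [DecidableEq α]

def colourIndicator (c : V → α) (l : α) (j : V) : ℝ := if c j = l then 1 else 0

variable [DecidableEq V]

lemma colourIndicator_update (c : V → α) (k : V) (i l : α) :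
    colourIndicator (Function.update c k i) l =
      colourIndicator c l + Pi.single k ((if i = l then 1 else 0) - colourIndicator c l k) := by
  funext j
  by_cases hj : j = k
  · subst hj
    simp [colourIndicator]
  · simp [colourIndicator, hj]

variable [Fintype V]

def colourCount (c : V → α) (l : α) : ℝ := ∑ j, colourIndicator c l j

lemma colourCount_update_sub (c : V → α) (k : V) (i l : α) :
    colourCount (Function.update c k i) l - colourCount c l =
      (if i = l then 1 else 0) - colourIndicator c l k := by
  simp only [colourCount, colourIndicator_update, Pi.add_apply, sum_add_distrib,
    Finset.sum_pi_single', mem_univ, if_true, add_sub_cancel_left]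

variable [Fintype α]

def resampleDrift (p : α → ℝ) (F : (V → α) → ℝ) (c : V → α) : ℝ :=
  ∑ k, ∑ i, p i * (F (Function.update c k i) - F c)

lemma sum_mul_ite_eq_sub {p : α → ℝ} (hp : ∑ i, p i = 1) (l : α) (a : ℝ) :
    ∑ i, p i * ((if i = l then 1 else 0) - a) = p l - a := by
  simp [mul_sub, sum_sub_distrib, ← sum_mul, hp]

lemma resampleDrift_colourCount {p : α → ℝ} (hp : ∑ i, p i = 1) (c : V → α) (l : α) :
    resampleDrift p (colourCount · l) c = Fintype.card V * p l - colourCount c l := by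
  simp only [resampleDrift, colourCount_update_sub, sum_mul_ite_eq_sub hp]
  simp [sum_sub_distrib, colourCount]

end Colouring

namespace SimpleGraph

variable {V : Type*} [Fintype V] (G : SimpleGraph V) [DecidableRel G.Adj]

lemma sum_sum_neighborFinset_comm {M : Type*} [AddCommMonoid M] (F : V → V → M) :
    ∑ j, ∑ j' ∈ G.neighborFinset j, F j j' = ∑ j', ∑ j ∈ G.neighborFinset j', F j j' := by
  simp only [neighborFinset_eq_filter, sum_filter]
  rw [sum_comm]
  simp only [G.adj_comm]

variable {G} in
lemma IsRegularOfDegree.sum_sum_neighborFinset {r : ℕ} (hG : G.IsRegularOfDegree r)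
    (f : V → ℝ) : ∑ k, ∑ j ∈ G.neighborFinset k, f j = r * ∑ j, f j := by
  rw [sum_sum_neighborFinset_comm, mul_sum]
  simp [hG.degree_eq]

variable [DecidableEq V]

lemma sum_sum_neighborFinset_mul_add_single (x : V → ℝ) (k : V) (δ : ℝ) :
    ∑ j, ∑ j' ∈ G.neighborFinset j,
        (x + Pi.single k δ : V → ℝ) j * (x + Pi.single k δ : V → ℝ) j' =
      ∑ j, ∑ j' ∈ G.neighborFinset j, x j * x j' + 2 * δ * ∑ j ∈ G.neighborFinset k, x j := by
  have hsingle (y : V → ℝ) :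
      ∑ j, ∑ j' ∈ G.neighborFinset j, (Pi.single k δ : V → ℝ) j * y j' =
        δ * ∑ j ∈ G.neighborFinset k, y j := by
    simp [Pi.single_apply, ite_mul, mul_sum]
  have hk : ∑ j ∈ G.neighborFinset k, (Pi.single k δ : V → ℝ) j = 0 := by
    simp [Pi.single_apply]
  have hsingle' : ∑ j, ∑ j' ∈ G.neighborFinset j, x j * (Pi.single k δ : V → ℝ) j' =
      δ * ∑ j ∈ G.neighborFinset k, x j := by
    rw [G.sum_sum_neighborFinset_comm, ← hsingle]
    simp only [mul_comm]
  simp only [Pi.add_apply, add_mul, mul_add, sum_add_distrib, hsingle, hsingle', hk]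
  ring

variable {α : Type*} [DecidableEq α]

noncomputable def monochromaticEdgeCount (c : V → α) (l : α) : ℝ :=
  (1 / 2) * ∑ j, ∑ j' ∈ G.neighborFinset j, colourIndicator c l j * colourIndicator c l j'

lemma monochromaticEdgeCount_update_sub (c : V → α) (k : V) (i l : α) :
    G.monochromaticEdgeCount (Function.update c k i) l - G.monochromaticEdgeCount c l =
      ((if i = l then 1 else 0) - colourIndicator c l k) *
        ∑ j ∈ G.neighborFinset k, colourIndicator c l j := by
  simp only [monochromaticEdgeCount, colourIndicator_update,
    sum_sum_neighborFinset_mul_add_single]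
  ring

lemma resampleDrift_monochromaticEdgeCount [Fintype α] {r : ℕ} (hG : G.IsRegularOfDegree r)
    {p : α → ℝ} (hp : ∑ i, p i = 1) (c : V → α) (l : α) :
    resampleDrift p (G.monochromaticEdgeCount · l) c =
      p l * r * colourCount c l - 2 * G.monochromaticEdgeCount c l := by
  have hvertex (k : V) :
      ∑ i, p i * (G.monochromaticEdgeCount (Function.update c k i) l -
        G.monochromaticEdgeCount c l) =
        (p l - colourIndicator c l k) * ∑ j ∈ G.neighborFinset k, colourIndicator c l j := by
    simp only [monochromaticEdgeCount_update_sub, ← mul_assoc, ← sum_mul, sum_mul_ite_eq_sub hp]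
  have hpairs : ∑ k, colourIndicator c l k * ∑ j ∈ G.neighborFinset k, colourIndicator c l j =
      2 * G.monochromaticEdgeCount c l := by
    simp [monochromaticEdgeCount, mul_sum]
  simp only [resampleDrift, hvertex, sub_mul, sum_sub_distrib, ← mul_sum,
    hG.sum_sum_neighborFinset, hpairs, colourCount]
  ring

end SimpleGraph

open ProbabilityTheory in
theorem condExp_update_sub_ae_eq_resampleDrift {Ω : Type*} [MeasurableSpace Ω] (P : Measure Ω)
    [IsProbabilityMeasure P] {n m : ℕ} {C : Ω → Fin n → Fin m} {K : Ω → Fin n} {C' : Ω → Fin m}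
    (hC : Measurable C) (hK : Measurable K) (hC' : Measurable C')
    {p : Fin m → ℝ} (hp : ∀ i, 0 ≤ p i)
    (hCK : IndepFun C K P) (hCKC' : IndepFun (fun ω => (C ω, K ω)) C' P)
    (hKunif : ∀ k, P {ω | K ω = k} = 1 / n)
    (hC'dist : ∀ i, P {ω | C' ω = i} = ENNReal.ofReal (p i))
    (F : (Fin n → Fin m) → ℝ) :
    P[fun ω => F (Function.update (C ω) (K ω) (C' ω)) - F (C ω) |
        MeasurableSpace.comap C inferInstance]
      =ᵐ[P] fun ω => (n : ℝ)⁻¹ * resampleDrift p F (C ω) := by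
  obtain ⟨ω₀⟩ := nonempty_of_isProbabilityMeasure P
  have : Nonempty (Fin n × Fin m) := ⟨(K ω₀, C' ω₀)⟩
  have hKC' : IndepFun K C' P := hCKC'.comp measurable_snd measurable_id
  have hlaw (k : Fin n) (i : Fin m) :
      (P.map fun ω => (K ω, C' ω)).real {(k, i)} = (n : ℝ)⁻¹ * p i := by
    rw [map_measureReal_apply (hK.prodMk hC') (measurableSet_singleton _), measureReal_def,
      ← Set.singleton_prod_singleton, Set.mk_preimage_prod,
      hKC'.measure_inter_preimage_eq_mul _ _ (measurableSet_singleton k)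
        (measurableSet_singleton i)]
    simp [Set.preimage, hKunif k, hC'dist i, hp i]
  have hind : IndepFun C (fun ω => (K ω, C' ω)) P :=
    hCK.prodMk_right_of_prodMk_left hC hK hC' hCKC'
  refine (hind.condExp_comp_prodMk_ae_eq hC (hK.prodMk hC')
    (f := fun x => F (Function.update x.1 x.2.1 x.2.2) - F x.1) Integrable.of_finite).trans
    (Filter.Eventually.of_forall fun ω => ?_)
  simp only [integral_fintype Integrable.of_finite, Fintype.sum_prod_type, hlaw, smul_eq_mul,
    resampleDrift, mul_sum, mul_assoc]

theorem stmt19_general {Ω : Type*} [MeasurableSpace Ω] (ℙ : Measure Ω) [IsProbabilityMeasure ℙ]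
    {n m r : ℕ} (G : SimpleGraph (Fin n)) [DecidableRel G.Adj]
    (hreg : ∀ v, G.degree v = r)
    (C : Ω → Fin n → Fin m) (K : Ω → Fin n) (C' : Ω → Fin m)
    (hC : Measurable C) (hK : Measurable K) (hC' : Measurable C')
    (p : Fin m → ℝ) (hp : ∀ i, 0 < p i) (hpsum : ∑ i, p i = 1)
    (hCK : ProbabilityTheory.IndepFun C K ℙ)
    (hCKC' : ProbabilityTheory.IndepFun (fun ω => (C ω, K ω)) C' ℙ)
    (hKunif : ∀ k, ℙ {ω | K ω = k} = 1 / n)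
    (hC'dist : ∀ i, ℙ {ω | C' ω = i} = ENNReal.ofReal (p i))
    (N : Fin m → (Fin n → Fin m) → ℝ)
    (hN : ∀ l c, N l c = ∑ j, if c j = l then (1 : ℝ) else 0)
    (M : Fin m → (Fin n → Fin m) → ℝ)
    (hM : ∀ l c, M l c = (1/2) * ∑ j, ∑ j' ∈ G.neighborFinset j,
      if c j = l ∧ c j' = l then (1 : ℝ) else 0)
    (l : Fin m) :
    ((ℙ[fun ω => M l (Function.update (C ω) (K ω) (C' ω)) - M l (C ω) |
        MeasurableSpace.comap C inferInstance])
      =ᵐ[ℙ] fun ω => (n : ℝ)⁻¹ * (p l * r * N l (C ω) - 2 * M l (C ω))) ∧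
    ((ℙ[fun ω => N l (Function.update (C ω) (K ω) (C' ω)) - N l (C ω) |
        MeasurableSpace.comap C inferInstance])
      =ᵐ[ℙ] fun ω => (n : ℝ)⁻¹ * (n * p l - N l (C ω))) := by
  have hNl : N l = (colourCount · l) := funext (hN l)
  have hMl : M l = (G.monochromaticEdgeCount · l) := funext fun c => by
    simp only [hM, SimpleGraph.monochromaticEdgeCount, colourIndicator, ite_zero_mul_ite_zero,
      mul_one]
  have hdrift := condExp_update_sub_ae_eq_resampleDrift ℙ hC hK hC' (fun i => (hp i).le) hCK hCKC'
    hKunif hC'dist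
  simp only [hNl, hMl]
  refine ⟨(hdrift (G.monochromaticEdgeCount · l)).trans ?_, (hdrift (colourCount · l)).trans ?_⟩
  · filter_upwards with ω
    rw [G.resampleDrift_monochromaticEdgeCount hreg hpsum]
  · filter_upwards with ω
    rw [resampleDrift_colourCount hpsum, Fintype.card_fin]

theorem stmt19 {Ω : Type*} [MeasurableSpace Ω] (ℙ : Measure Ω) [IsProbabilityMeasure ℙ]
    {n m r : ℕ} (G : SimpleGraph (Fin n)) [DecidableRel G.Adj]
    (hreg : ∀ v, G.degree v = r)
    (C : Ω → Fin n → Fin m) (K : Ω → Fin n) (C' : Ω → Fin m)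
    (hC : Measurable C) (hK : Measurable K) (hC' : Measurable C')
    (p : Fin m → ℝ) (hp : ∀ i, 0 < p i) (hpsum : ∑ i, p i = 1)
    (hCind : ProbabilityTheory.iIndepFun (fun j ω => C ω j) ℙ)
    (hCdist : ∀ j i, ℙ {ω | C ω j = i} = ENNReal.ofReal (p i))
    (hCK : ProbabilityTheory.IndepFun C K ℙ)
    (hCKC' : ProbabilityTheory.IndepFun (fun ω => (C ω, K ω)) C' ℙ)
    (hKunif : ∀ k, ℙ {ω | K ω = k} = 1 / n)
    (hC'dist : ∀ i, ℙ {ω | C' ω = i} = ENNReal.ofReal (p i))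
    (N : Fin m → (Fin n → Fin m) → ℝ)
    (hN : ∀ l c, N l c = ∑ j, if c j = l then (1 : ℝ) else 0)
    (M : Fin m → (Fin n → Fin m) → ℝ)
    (hM : ∀ l c, M l c = (1/2) * ∑ j, ∑ j' ∈ G.neighborFinset j,
      if c j = l ∧ c j' = l then (1 : ℝ) else 0)
    (l : Fin m) :
    ((ℙ[fun ω => M l (Function.update (C ω) (K ω) (C' ω)) - M l (C ω) |
        MeasurableSpace.comap C inferInstance])
      =ᵐ[ℙ] fun ω => (n : ℝ)⁻¹ * (p l * r * N l (C ω) - 2 * M l (C ω))) ∧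
    ((ℙ[fun ω => N l (Function.update (C ω) (K ω) (C' ω)) - N l (C ω) |
        MeasurableSpace.comap C inferInstance])
      =ᵐ[ℙ] fun ω => (n : ℝ)⁻¹ * (n * p l - N l (C ω))) :=
  stmt19_general ℙ G hreg C K C' hC hK hC' p hp hpsum hCK hCKC' hKunif hC'dist N hN M hM l
end
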